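/- The class of linearly ordered sets equipped with one strict order reversing unary operation has the amalgamation property: whenever A, B, C are linearly ordered sets with strictly antitone unary operations g_A, g_B, g_C and i_A : C → A, i_B : C → B are order embeddings satisfying i_A ∘ g_C = g_A ∘ i_A and i_B ∘ g_C = g_B ∘ i_B, there exist a linearly ordered set D with a strictly antitone unary operation g_D and order embeddings j_A : A → D, j_B : B → D commuting with the operations, such that j_A ∘ i_A = j_B ∘ i_B. -/

import Mathlib

/-- A linearly ordered set equipped with one strict order reversing (strictly
antitone) unary operation. -/
structure LinOrderStrictAnti where
  carrier : Type
  [linOrd : LinearOrder carrier]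
  g : carrier → carrier
  santi : StrictAnti g

attribute [instance] LinOrderStrictAnti.linOrd

/-!
Every `L` embeds, compatibly with `g`, into the mirror `N ⊕ {mid} ⊕ Nᵒᵈ` of its lower half
`N = {x | x < g x}`: `x ∈ N` goes to `low x`, a fixed point to `mid`, and `x` with `g x < x` to
`high (g x)`; the mirror's operation sends `low x` to `high (g (g x))` and `high x` to `low x`.
This only involves the order embedding `σ = g ∘ g` of `N`, so it suffices to amalgamate linear
orders carrying order self-embeddings `σ`. That is done on `A ⊕ B`: a point of `A` and a point of
`B` are compared through `C` after applying a common iterate `σⁿ` (standing in for the missing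
preimages `σ⁻ⁿ`), and points that no element of `C` separates are put with `A` first, a choice
that `σ` preserves because it is monotone.
-/

open Function

noncomputable section

section

variable {A B C : Type*} [LinearOrder A] [LinearOrder B] [LinearOrder C]

def AmalgamPre (_σA : A ↪o A) (_σB : B ↪o B) (_iA : C ↪o A) (_iB : C ↪o B) : Type _ := A ⊕ B

namespace AmalgamPre

def Le (σA : A ↪o A) (σB : B ↪o B) (iA : C ↪o A) (iB : C ↪o B) : A ⊕ B → A ⊕ B → Prop
  | .inl a, .inl a' => a ≤ a'
  | .inr b, .inr b' => b ≤ b'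
  -- `a ≤ b` unless some `c` has `σⁿ b ≤ iB c` and `iA c ≤ σⁿ a`, one of them strictly
  | .inl a, .inr b => ∀ c n, (iA c ≤ σA^[n] a → iB c ≤ σB^[n] b) ∧
      (iA c < σA^[n] a → iB c < σB^[n] b)
  | .inr b, .inl a => ∃ c n, σB^[n] b ≤ iB c ∧ iA c ≤ σA^[n] a

variable {σA : A ↪o A} {σB : B ↪o B} {iA : C ↪o A} {iB : C ↪o B}

theorem Le.trans {x y z : A ⊕ B} (hxy : Le σA σB iA iB x y) (hyz : Le σA σB iA iB y z) :
    Le σA σB iA iB x z := by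
  have mA := σA.strictMono.iterate
  have mB := σB.strictMono.iterate
  rcases x with a | b <;> rcases y with a' | b' <;> rcases z with a'' | b'' <;>
    simp only [Le] at hxy hyz ⊢
  · exact hxy.trans hyz
  · exact fun c n => ⟨fun h => (hyz c n).1 (h.trans ((mA n).monotone hxy)),
      fun h => (hyz c n).2 (h.trans_le ((mA n).monotone hxy))⟩
  · obtain ⟨c, n, hb, ha⟩ := hyz
    by_contra! h
    exact ((hxy c n).2 (ha.trans_lt (mA n h))).not_ge hb
  · exact fun c n => ⟨fun h => ((hxy c n).1 h).trans ((mB n).monotone hyz),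
      fun h => ((hxy c n).2 h).trans_le ((mB n).monotone hyz)⟩
  · obtain ⟨c, n, hb, ha⟩ := hxy
    exact ⟨c, n, hb, ha.trans ((mA n).monotone hyz)⟩
  · obtain ⟨c, n, hb, ha⟩ := hxy
    exact (mB n).le_iff_le.mp (hb.trans ((hyz c n).1 ha))
  · obtain ⟨c, n, hb, ha⟩ := hyz
    exact ⟨c, n, ((mB n).monotone hxy).trans hb, ha⟩
  · exact hxy.trans hyz

instance : Preorder (AmalgamPre σA σB iA iB) where
  le := Le σA σB iA iB
  le_refl x := by rcases x with a | b <;> exact le_rfl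
  le_trans _ _ _ := Le.trans

theorem le_total_inl_inr (a : A) (b : B) :
    Le σA σB iA iB (.inl a) (.inr b) ∨ Le σA σB iA iB (.inr b) (.inl a) := by
  refine or_iff_not_imp_right.mpr fun h c n => ?_
  simp only [Le, not_exists, not_and, not_le] at h
  exact ⟨fun ha => not_lt.mp fun hb => (h c n hb.le).not_ge ha,
    fun ha => not_le.mp fun hb => lt_asymm ha (h c n hb)⟩

instance : Std.Total (α := AmalgamPre σA σB iA iB) (· ≤ ·) where
  total
    | .inl a, .inl a' => le_total a a'
    | .inl a, .inr b => le_total_inl_inr a b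
    | .inr b, .inl a => (le_total_inl_inr a b).symm
    | .inr b, .inr b' => le_total b b'

variable {σC : C → C}

theorem le_sumMap_iff (hA : Semiconj iA σC σA) (hB : Semiconj iB σC σB) {x y : A ⊕ B} :
    Le σA σB iA iB (Sum.map σA σB x) (Sum.map σA σB y) ↔ Le σA σB iA iB x y := by
  rcases x with a | b <;> rcases y with a' | b' <;>
    simp only [Le, Sum.map_inl, Sum.map_inr, ← iterate_succ_apply]
  · exact σA.le_iff_le
  · refine ⟨fun h c n => ?_, fun h c n => h c (n + 1)⟩
    simpa only [iterate_succ_apply', hA c, hB c, OrderEmbedding.le_iff_le,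
      OrderEmbedding.lt_iff_lt] using h (σC c) n
  · refine ⟨fun ⟨c, n, hb, ha⟩ => ⟨c, n + 1, hb, ha⟩, fun ⟨c, n, hb, ha⟩ => ⟨σC c, n, ?_, ?_⟩⟩
    · rw [iterate_succ_apply', hB c]
      exact σB.monotone hb
    · rw [iterate_succ_apply', hA c]
      exact σA.monotone ha
  · exact σB.le_iff_le

theorem antisymmRel_inl_inr (hA : Semiconj iA σC σA) (hB : Semiconj iB σC σB) (c : C) :
    @AntisymmRel (AmalgamPre σA σB iA iB) (· ≤ ·) (.inl (iA c)) (.inr (iB c)) := by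
  refine ⟨fun c' n => ?_, ⟨c, 0, le_rfl, le_rfl⟩⟩
  simp only [← hA.iterate_right n c, ← hB.iterate_right n c, OrderEmbedding.le_iff_le,
    OrderEmbedding.lt_iff_lt]
  exact ⟨id, id⟩

end AmalgamPre

def Amalgam (σA : A ↪o A) (σB : B ↪o B) (iA : C ↪o A) (iB : C ↪o B) : Type _ :=
  Antisymmetrization (AmalgamPre σA σB iA iB) (· ≤ ·)

namespace Amalgam

variable {σA : A ↪o A} {σB : B ↪o B} {iA : C ↪o A} {iB : C ↪o B} {σC : C → C}

instance : LinearOrder (Amalgam σA σB iA iB) := by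
  classical exact inferInstanceAs (LinearOrder (Antisymmetrization _ _))

def inl : A ↪o Amalgam σA σB iA iB :=
  .ofMapLEIff (fun a => toAntisymmetrization _ (Sum.inl a : AmalgamPre σA σB iA iB))
    fun _ _ => Iff.rfl

def inr : B ↪o Amalgam σA σB iA iB :=
  .ofMapLEIff (fun b => toAntisymmetrization _ (Sum.inr b : AmalgamPre σA σB iA iB))
    fun _ _ => Iff.rfl

theorem inl_apply_eq_inr_apply (hA : Semiconj iA σC σA) (hB : Semiconj iB σC σB) (c : C) :
    (inl : A ↪o Amalgam σA σB iA iB) (iA c) = inr (iB c) :=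
  Quotient.sound (AmalgamPre.antisymmRel_inl_inr hA hB c)

def shift (hA : Semiconj iA σC σA) (hB : Semiconj iB σC σB) :
    Amalgam σA σB iA iB ↪o Amalgam σA σB iA iB :=
  .ofMapLEIff
    (Quotient.map' (Sum.map σA σB) fun _ _ h =>
      ⟨(AmalgamPre.le_sumMap_iff hA hB).2 h.1, (AmalgamPre.le_sumMap_iff hA hB).2 h.2⟩)
    fun x y => Quotient.inductionOn₂' x y fun _ _ => AmalgamPre.le_sumMap_iff hA hB

theorem semiconj_inl_shift (hA : Semiconj iA σC σA) (hB : Semiconj iB σC σB) :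
    Semiconj inl σA (shift hA hB) := fun _ => rfl

theorem semiconj_inr_shift (hA : Semiconj iA σC σA) (hB : Semiconj iB σC σB) :
    Semiconj inr σB (shift hA hB) := fun _ => rfl

end Amalgam

end

inductive Mirror (M : Type*)
  | low : M → Mirror M
  | mid : Mirror M
  | high : M → Mirror M

namespace Mirror

variable {M : Type*}

def toSum : Mirror M → M ⊕ₗ (Unit ⊕ₗ Mᵒᵈ)
  | low m => toLex (.inl m)
  | mid => toLex (.inr (toLex (.inl ())))
  | high m => toLex (.inr (toLex (.inr (OrderDual.toDual m))))

theorem toSum_injective : Injective (toSum : Mirror M → _) := by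
  rintro (_ | _ | _) (_ | _ | _) h <;> simp_all [toSum]

variable [LinearOrder M]

instance : LinearOrder (Mirror M) := LinearOrder.lift' toSum toSum_injective

@[simp] theorem low_lt_low_iff {a b : M} : low a < low b ↔ a < b := Sum.Lex.inl_lt_inl_iff

@[simp] theorem high_lt_high_iff {a b : M} : high a < high b ↔ b < a :=
  Sum.Lex.inr_lt_inr_iff.trans (Sum.Lex.inr_lt_inr_iff.trans OrderDual.toDual_lt_toDual)

@[simp] theorem low_lt_mid (a : M) : low a < mid := Sum.Lex.inl_lt_inr _ _

@[simp] theorem low_lt_high (a b : M) : low a < high b := Sum.Lex.inl_lt_inr _ _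

@[simp] theorem mid_lt_high (a : M) : (mid : Mirror M) < high a :=
  Sum.Lex.inr_lt_inr_iff.2 (Sum.Lex.inl_lt_inr _ _)

@[simp] theorem not_mid_lt_low (a : M) : ¬mid < low a := lt_asymm (low_lt_mid a)

@[simp] theorem not_high_lt_low (a b : M) : ¬high a < low b := lt_asymm (low_lt_high b a)

@[simp] theorem not_high_lt_mid (a : M) : ¬high a < mid := lt_asymm (mid_lt_high a)

def map (σ : M → M) : Mirror M → Mirror M
  | low m => high (σ m)
  | mid => mid
  | high m => low m

theorem strictAnti_map {σ : M → M} (hσ : StrictMono σ) : StrictAnti (map σ) := by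
  rintro (a | _ | a) (b | _ | b) h <;> simp_all [map, hσ.lt_iff_lt]

end Mirror

namespace LinOrderStrictAnti

variable (L : LinOrderStrictAnti)

abbrev LowerHalf : Type := {x : L.carrier // x < L.g x}

def lowerHalfShift : L.LowerHalf ↪o L.LowerHalf :=
  .ofStrictMono (fun x => ⟨L.g (L.g x), L.santi (L.santi x.2)⟩)
    fun _ _ h => L.santi (L.santi h)

def lowerHalfMap {C A : LinOrderStrictAnti} (i : C.carrier ↪o A.carrier)
    (hi : Semiconj i C.g A.g) : C.LowerHalf ↪o A.LowerHalf :=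
  .ofStrictMono (fun x => ⟨i x, hi x ▸ i.strictMono x.2⟩) fun _ _ h => i.strictMono h

theorem semiconj_lowerHalfMap {C A : LinOrderStrictAnti} (i : C.carrier ↪o A.carrier)
    (hi : Semiconj i C.g A.g) :
    Semiconj (lowerHalfMap i hi) C.lowerHalfShift A.lowerHalfShift :=
  fun x => Subtype.ext <| (hi _).trans (congrArg A.g (hi x))

def mirror {M : Type} [LinearOrder M] (σ : M ↪o M) : LinOrderStrictAnti :=
  ⟨Mirror M, Mirror.map σ, Mirror.strictAnti_map σ.strictMono⟩

variable {M : Type*} [LinearOrder M]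

def toMirrorFun (f : L.LowerHalf ↪o M) (x : L.carrier) : Mirror M :=
  if h : x < L.g x then .low (f ⟨x, h⟩)
  else if h' : L.g x < x then .high (f ⟨L.g x, L.santi h'⟩)
  else .mid

theorem toMirrorFun_strictMono (f : L.LowerHalf ↪o M) : StrictMono (L.toMirrorFun f) := by
  intro x y hxy
  have hg := L.santi hxy
  unfold toMirrorFun
  split_ifs <;>
    simp only [Mirror.low_lt_low_iff, Mirror.high_lt_high_iff, Mirror.low_lt_mid,
      Mirror.low_lt_high, Mirror.mid_lt_high, Mirror.not_mid_lt_low, Mirror.not_high_lt_low,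
      Mirror.not_high_lt_mid, lt_self_iff_false, f.lt_iff_lt, Subtype.mk_lt_mk] <;>
    order

def toMirror (f : L.LowerHalf ↪o M) : L.carrier ↪o Mirror M :=
  .ofStrictMono (L.toMirrorFun f) (L.toMirrorFun_strictMono f)

theorem semiconj_toMirror {σ : M → M} {f : L.LowerHalf ↪o M}
    (hf : Semiconj f L.lowerHalfShift σ) : Semiconj (L.toMirror f) L.g (Mirror.map σ) := by
  intro x
  rcases lt_trichotomy x (L.g x) with h | h | h
  · have h' := L.santi h
    simp only [toMirror, OrderEmbedding.coe_ofStrictMono, toMirrorFun, h, h', h'.not_gt,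
      ↓reduceDIte, Mirror.map, ← hf ⟨x, h⟩, Mirror.high.injEq, EmbeddingLike.apply_eq_iff_eq]
    rfl
  · simp [toMirror, toMirrorFun, ← h, Mirror.map]
  · simp [toMirror, toMirrorFun, h, h.not_gt, L.santi h, Mirror.map]

theorem toMirror_comp {C : LinOrderStrictAnti} (i : C.carrier ↪o L.carrier)
    (hi : Semiconj i C.g L.g) (f : L.LowerHalf ↪o M) (c : C.carrier) :
    L.toMirror f (i c) = C.toMirror ((lowerHalfMap i hi).trans f) c := by
  simp only [toMirror, OrderEmbedding.coe_ofStrictMono, toMirrorFun, ← hi c, i.lt_iff_lt]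
  rfl

end LinOrderStrictAnti

end

/-- The class of linearly ordered sets with one strict order reversing unary
operation has the amalgamation property. -/
theorem linear_orders_one_strict_antitone_op_amalgamation
    (A B C : LinOrderStrictAnti)
    (iA : C.carrier ↪o A.carrier) (iB : C.carrier ↪o B.carrier)
    (hA : ∀ c, iA (C.g c) = A.g (iA c))
    (hB : ∀ c, iB (C.g c) = B.g (iB c)) :
    ∃ (D : LinOrderStrictAnti) (jA : A.carrier ↪o D.carrier)
      (jB : B.carrier ↪o D.carrier),
      (∀ a, jA (A.g a) = D.g (jA a)) ∧
      (∀ b, jB (B.g b) = D.g (jB b)) ∧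
      (∀ c, jA (iA c) = jB (iB c)) := by
  have hA' := LinOrderStrictAnti.semiconj_lowerHalfMap iA hA
  have hB' := LinOrderStrictAnti.semiconj_lowerHalfMap iB hB
  have hAB : (C.lowerHalfMap iA hA).trans Amalgam.inl = (C.lowerHalfMap iB hB).trans Amalgam.inr :=
    RelEmbedding.ext (Amalgam.inl_apply_eq_inr_apply hA' hB')
  refine ⟨.mirror (Amalgam.shift hA' hB'), A.toMirror Amalgam.inl, B.toMirror Amalgam.inr,
    A.semiconj_toMirror (Amalgam.semiconj_inl_shift hA' hB'),
    B.semiconj_toMirror (Amalgam.semiconj_inr_shift hA' hB'), fun c => ?_⟩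
  calc A.toMirror Amalgam.inl (iA c)
      = C.toMirror ((C.lowerHalfMap iA hA).trans Amalgam.inl) c := A.toMirror_comp iA hA _ c
    _ = C.toMirror ((C.lowerHalfMap iB hB).trans Amalgam.inr) c := by rw [hAB]
    _ = B.toMirror Amalgam.inr (iB c) := (B.toMirror_comp iB hB _ c).symm
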